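/- Let A ⊆ ω^ω with A not an (l^0)-set and let 𝓕 be a point-finite cover of A by (l^0)-sets. Suppose for each Laver tree T with A ∩ [T] ≠ ∅ there is a Laver subtree Q ≤ T (with A ∩ [Q] ≠ ∅) such that {F ∩ [Q] : F ∈ 𝓕} has cardinality continuum. Then there exists a subfamily 𝓕' ⊆ 𝓕 such that ⋃𝓕' is not an (l)-set. -/
import Mathlib


open Cardinal

/-- A tree: a set of finite sequences closed under initial segments. -/
def IsTree {α : Type*} (T : Set (List α)) : Prop :=
  ∀ t ∈ T, ∀ n, t.take n ∈ T

/-- The body `[T]` of a tree. -/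
def body {α : Type*} (T : Set (List α)) : Set (ℕ → α) :=
  {x | ∀ n, List.ofFn (fun i : Fin n => x i) ∈ T}

/-- A Laver tree. -/
def LaverTree (T : Set (List ℕ)) : Prop :=
  IsTree T ∧ ∃ s ∈ T, (∀ t ∈ T, t <+: s ∨ s <+: t) ∧
    ∀ t ∈ T, s <+: t → {n : ℕ | t ++ [n] ∈ T}.Infinite

/-- `X` is an `(l)`-set. -/
def LSet (X : Set (ℕ → ℕ)) : Prop :=
  ∀ T, LaverTree T → ∃ Q ⊆ T, LaverTree Q ∧ (body Q ⊆ X ∨ body Q ∩ X = ∅)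

/-- `X` is an `(l⁰)`-set. -/
def L0 (X : Set (ℕ → ℕ)) : Prop :=
  ∀ T, LaverTree T → ∃ Q ⊆ T, LaverTree Q ∧ body Q ∩ X = ∅

/-- A family of sets is point-finite if every point lies in only finitely many members. -/
def PointFinite {X : Type*} (F : Set (Set X)) : Prop :=
  ∀ x : X, {G ∈ F | x ∈ G}.Finite

namespace LaverAux

open Set

abbrev Pt := ℕ → ℕ

lemma body_mono {α : Type*} {Q T : Set (List α)} (h : Q ⊆ T) : body Q ⊆ body T :=
  fun _ hx n => h (hx n)

/-- A Laver tree together with an explicit stem. -/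
def Stemmed (T : Set (List ℕ)) (s : List ℕ) : Prop :=
  IsTree T ∧ s ∈ T ∧ (∀ t ∈ T, t <+: s ∨ s <+: t) ∧
    ∀ t ∈ T, s <+: t → {n : ℕ | t ++ [n] ∈ T}.Infinite

lemma Stemmed.laver {T s} (h : Stemmed T s) : LaverTree T :=
  ⟨h.1, s, h.2.1, h.2.2.1, h.2.2.2⟩

lemma laver_stemmed {T} (h : LaverTree T) : ∃ s, Stemmed T s := by
  obtain ⟨h1, s, hs, h2, h3⟩ := h
  exact ⟨s, h1, hs, h2, h3⟩

/-- The subtree of `T` consisting of the nodes comparable with `u`. -/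
def subAt (T : Set (List ℕ)) (u : List ℕ) : Set (List ℕ) :=
  {t ∈ T | t <+: u ∨ u <+: t}

lemma subAt_subset (T : Set (List ℕ)) (u : List ℕ) : subAt T u ⊆ T :=
  fun _ ht => ht.1

lemma Stemmed.subAt {T s u} (h : Stemmed T s) (hu : u ∈ T) (hsu : s <+: u) :
    Stemmed (LaverAux.subAt T u) u := by
  obtain ⟨hTree, _, hcomp, hsplit⟩ := h
  refine ⟨?_, ⟨hu, Or.inl List.prefix_rfl⟩, fun t ht => ht.2, ?_⟩
  · intro t ht n
    refine ⟨hTree t ht.1 n, ?_⟩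
    rcases ht.2 with h1 | h1
    · exact Or.inl ((List.take_prefix n t).trans h1)
    · exact List.prefix_or_prefix_of_prefix (List.take_prefix n t) h1
  · intro t ht hut
    have hst : s <+: t := hsu.trans hut
    refine (hsplit t ht.1 hst).mono ?_
    intro n hn
    exact ⟨hn, Or.inr (hut.trans (List.prefix_append t [n]))⟩

lemma Stemmed.extend {T s} (h : Stemmed T s) (m : ℕ) :
    ∃ T' s', T' ⊆ T ∧ Stemmed T' s' ∧ s <+: s' ∧ m ≤ s'.length := by
  induction m with
  | zero => exact ⟨T, s, subset_rfl, h, List.prefix_rfl, Nat.zero_le _⟩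
  | succ m ih =>
    obtain ⟨T', s', hsub, hst, hpre, hlen⟩ := ih
    obtain ⟨k, hk⟩ := (hst.2.2.2 s' hst.2.1 List.prefix_rfl).nonempty
    refine ⟨LaverAux.subAt T' (s' ++ [k]), s' ++ [k], (subAt_subset _ _).trans hsub,
      hst.subAt hk (List.prefix_append _ _), hpre.trans (List.prefix_append _ _), ?_⟩
    simpa using Nat.succ_le_succ hlen

section Rec

variable {ι : Type} [LinearOrder ι] [WellFoundedLT ι]

open scoped Classical in
/-- choice of the "outside" point at stage `i`. -/
noncomputable def yOf (B : ι → Set Pt) (i : ι) (g : ∀ j, j < i → Pt × Set Pt) : Pt :=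
  if h : ∃ y, y ∈ B i ∧ y ∉ ⋃₀ {F | ∃ j, ∃ hj : j < i, (g j hj).2 = F} then h.choose
  else fun _ => 0

open scoped Classical in
/-- choice of the member of the family at stage `i`. -/
noncomputable def FOf (pool : Set (Set Pt)) (B : ι → Set Pt) (i : ι)
    (g : ∀ j, j < i → Pt × Set Pt) : Set Pt :=
  if h : ∃ F, F ∈ pool ∧ (F ∩ B i).Nonempty ∧
      ∀ z ∈ insert (yOf B i g) {z | ∃ j, ∃ hj : j < i, (g j hj).1 = z}, z ∉ F then h.choose
  else ∅

noncomputable def pairF (pool : Set (Set Pt)) (B : ι → Set Pt) : ι → Pt × Set Pt :=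
  (wellFounded_lt).fix fun i g => (yOf B i g, FOf pool B i g)

lemma pairF_eq (pool : Set (Set Pt)) (B : ι → Set Pt) (i : ι) :
    pairF pool B i =
      (yOf B i fun j _ => pairF pool B j, FOf pool B i fun j _ => pairF pool B j) :=
  WellFounded.fix_eq _ _ _

lemma yOf_spec (B : ι → Set Pt) (i : ι) (g : ∀ j, j < i → Pt × Set Pt)
    (h : ∃ y, y ∈ B i ∧ y ∉ ⋃₀ {F | ∃ j, ∃ hj : j < i, (g j hj).2 = F}) :
    yOf B i g ∈ B i ∧ yOf B i g ∉ ⋃₀ {F | ∃ j, ∃ hj : j < i, (g j hj).2 = F} := by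
  rw [yOf, dif_pos h]
  exact h.choose_spec

lemma FOf_spec (pool : Set (Set Pt)) (B : ι → Set Pt) (i : ι) (g : ∀ j, j < i → Pt × Set Pt)
    (h : ∃ F, F ∈ pool ∧ (F ∩ B i).Nonempty ∧
      ∀ z ∈ insert (yOf B i g) {z | ∃ j, ∃ hj : j < i, (g j hj).1 = z}, z ∉ F) :
    FOf pool B i g ∈ pool ∧ (FOf pool B i g ∩ B i).Nonempty ∧
      ∀ z ∈ insert (yOf B i g) {z | ∃ j, ∃ hj : j < i, (g j hj).1 = z},
        z ∉ FOf pool B i g := by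
  rw [FOf, dif_pos h]
  exact h.choose_spec

lemma exists_pairs
    (hsmall : ∀ i : ι, #(Set.Iio i) < continuum)
    (pool : Set (Set Pt)) (B : ι → Set Pt)
    (hy : ∀ (i : ι) (H : Set (Set Pt)), H ⊆ pool → #H < continuum →
      ∃ y, y ∈ B i ∧ y ∉ ⋃₀ H)
    (hF : ∀ (i : ι) (Z : Set Pt), #Z < continuum →
      ∃ F, F ∈ pool ∧ (F ∩ B i).Nonempty ∧ ∀ z ∈ Z, z ∉ F) :
    ∃ (yv : ι → Pt) (Fv : ι → Set Pt), (∀ i, yv i ∈ B i) ∧ (∀ i, Fv i ∈ pool) ∧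
      (∀ i, (Fv i ∩ B i).Nonempty) ∧ ∀ i j, yv i ∉ Fv j := by
  classical
  set f := pairF pool B with hfdef
  have main : ∀ i : ι,
      ((f i).1 ∈ B i ∧ ∀ j, j < i → (f i).1 ∉ (f j).2) ∧
      ((f i).2 ∈ pool ∧ ((f i).2 ∩ B i).Nonempty ∧ ∀ j, j ≤ i → (f j).1 ∉ (f i).2) := by
    intro i
    induction i using WellFoundedLT.induction with
    | _ i IH =>
      have hfy : (f i).1 = yOf B i fun j _ => f j := by rw [hfdef, pairF_eq]
      have hfF : (f i).2 = FOf pool B i fun j _ => f j := by rw [hfdef, pairF_eq]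
      -- the family of previously chosen sets
      have hHsub : {F | ∃ j, ∃ hj : j < i, (f j).2 = F} ⊆ pool := by
        rintro F ⟨j, hj, rfl⟩
        exact (IH j hj).2.1
      have hHcard : #{F | ∃ j, ∃ hj : j < i, (f j).2 = F} < continuum := by
        have he : {F | ∃ j, ∃ hj : j < i, (f j).2 = F} =
            Set.range (fun j : Set.Iio i => (f j.1).2) := by
          ext F
          constructor
          · rintro ⟨j, hj, rfl⟩; exact ⟨⟨j, hj⟩, rfl⟩
          · rintro ⟨⟨j, hj⟩, rfl⟩; exact ⟨j, hj, rfl⟩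
        rw [he]
        exact lt_of_le_of_lt mk_range_le (hsmall i)
      have hycond : ∃ y, y ∈ B i ∧
          y ∉ ⋃₀ {F | ∃ j, ∃ hj : j < i, ((fun j (_ : j < i) => f j) j hj).2 = F} :=
        hy i _ hHsub hHcard
      have hyspec := yOf_spec B i (fun j _ => f j) hycond
      -- the set of points to avoid
      have hZcard : #(insert (yOf B i fun j _ => f j)
          {z | ∃ j, ∃ hj : j < i, (f j).1 = z} : Set Pt) < continuum := by
        have h1 : #{z | ∃ j, ∃ hj : j < i, (f j).1 = z} < continuum := by
          have he : {z | ∃ j, ∃ hj : j < i, (f j).1 = z} =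
              Set.range (fun j : Set.Iio i => (f j.1).1) := by
            ext z
            constructor
            · rintro ⟨j, hj, rfl⟩; exact ⟨⟨j, hj⟩, rfl⟩
            · rintro ⟨⟨j, hj⟩, rfl⟩; exact ⟨j, hj, rfl⟩
          rw [he]
          exact lt_of_le_of_lt mk_range_le (hsmall i)
        refine lt_of_le_of_lt mk_insert_le ?_
        exact add_lt_of_lt aleph0_le_continuum h1 (one_lt_aleph0.trans aleph0_lt_continuum)
      have hFcond : ∃ F, F ∈ pool ∧ (F ∩ B i).Nonempty ∧
          ∀ z ∈ insert (yOf B i fun j _ => f j)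
            {z | ∃ j, ∃ hj : j < i, ((fun j (_ : j < i) => f j) j hj).1 = z}, z ∉ F :=
        hF i _ hZcard
      have hFspec := FOf_spec pool B i (fun j _ => f j) hFcond
      constructor
      · constructor
        · rw [hfy]; exact hyspec.1
        · intro j hj hmem
          rw [hfy] at hmem
          exact hyspec.2 ⟨(f j).2, ⟨j, hj, rfl⟩, hmem⟩
      · refine ⟨by rw [hfF]; exact hFspec.1, by rw [hfF]; exact hFspec.2.1, ?_⟩
        intro j hj hmem
        rw [hfF] at hmem
        rcases eq_or_lt_of_le hj with rfl | hlt
        · exact hFspec.2.2 _ (Set.mem_insert_iff.mpr (Or.inl hfy)) hmem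
        · exact hFspec.2.2 _ (Set.mem_insert_iff.mpr (Or.inr ⟨j, hlt, rfl⟩)) hmem
  refine ⟨fun i => (f i).1, fun i => (f i).2, fun i => (main i).1.1, fun i => (main i).2.1,
    fun i => (main i).2.2.1, ?_⟩
  intro i j
  rcases le_or_gt i j with h | h
  · exact (main j).2.2.2 i h
  · exact (main i).1.2 j h

end Rec

end LaverAux

/-- If `A` is not `(l⁰)`, `𝓕` is a point-finite cover of `A` by `(l⁰)`-sets, and every
Laver tree whose body meets `A` has a Laver subtree whose body meets `A` on which the
restricted family has cardinality continuum, then some subfamily `𝓕' ⊆ 𝓕` has a union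
that is not an `(l)`-set. -/
theorem exists_subfamily_not_lSet (A : Set (ℕ → ℕ)) (hA : ¬ L0 A)
    (𝓕 : Set (Set (ℕ → ℕ))) (hpf : PointFinite 𝓕)
    (hmem : ∀ F ∈ 𝓕, L0 F) (hcov : A ⊆ ⋃₀ 𝓕)
    (hbig : ∀ T, LaverTree T → (A ∩ body T).Nonempty →
      ∃ Q ⊆ T, LaverTree Q ∧ (A ∩ body Q).Nonempty ∧
        #{S : Set (ℕ → ℕ) | ∃ F ∈ 𝓕, S = F ∩ body Q} = continuum) :
    ∃ 𝓕' ⊆ 𝓕, ¬ LSet (⋃₀ 𝓕') := by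
  classical
  open LaverAux in
  -- Extract a Laver tree `T₀` all of whose Laver subtrees meet `A`.
  rw [L0] at hA
  push_neg at hA
  obtain ⟨T₀, hT₀lav, hT₀⟩ := hA
  have hpos : ∀ Q, Q ⊆ T₀ → LaverTree Q → (A ∩ body Q).Nonempty := by
    intro Q h1 h2
    obtain ⟨y, hy1, hy2⟩ := hT₀ Q h1 h2
    exact ⟨y, hy2, hy1⟩
  by_cases hGP : ∃ X T₄, X ⊆ 𝓕 ∧ #X < continuum ∧ T₄ ⊆ T₀ ∧ LaverTree T₄ ∧
      ∀ H : Set (Set (ℕ → ℕ)), H ⊆ 𝓕 \ X → #H < continuum →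
        ∀ Q, Q ⊆ T₄ → LaverTree Q → ¬ (body Q ⊆ ⋃₀ H)
  · -- Good-pair case: run the transfinite construction below `T₄`.
    obtain ⟨X₀, T₄, hX₀F, hX₀c, hT₄T₀, hT₄lav, hGP⟩ := hGP
    set ι := continuum.ord.ToType with hι
    -- enumerate the Laver subtrees of `T₄`
    set 𝒬 := {Q : Set (List ℕ) // Q ⊆ T₄ ∧ LaverTree Q} with h𝒬
    have hQcard : #𝒬 ≤ #ι := by
      rw [Cardinal.mk_ord_toType]
      calc #𝒬 ≤ #(Set (List ℕ)) := Cardinal.mk_subtype_le _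
        _ = 2 ^ #(List ℕ) := Cardinal.mk_set
        _ = 2 ^ ℵ₀ := by rw [Cardinal.mk_list_eq_aleph0]
        _ = continuum := Cardinal.two_power_aleph0
    obtain ⟨emb⟩ := (Cardinal.le_def _ _).mp hQcard
    have hσex : ∀ i : ι, ∃ q : 𝒬, (∃ q' : 𝒬, emb q' = i) → emb q = i := by
      intro i
      by_cases h : ∃ q' : 𝒬, emb q' = i
      · exact ⟨h.choose, fun _ => h.choose_spec⟩
      · exact ⟨⟨T₄, subset_rfl, hT₄lav⟩, fun hc => absurd hc h⟩
    choose σ hσ using hσex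
    have hσsurj : ∀ q : 𝒬, σ (emb q) = q := by
      intro q
      exact emb.injective (hσ (emb q) ⟨q, rfl⟩)
    -- choose the `hbig` subtrees
    have hQt : ∀ i : ι, ∃ Q, Q ⊆ (σ i).1 ∧ (LaverTree Q ∧ (A ∩ body Q).Nonempty ∧
        #{S : Set (ℕ → ℕ) | ∃ F ∈ 𝓕, S = F ∩ body Q} = continuum) := by
      intro i
      have h1 : (σ i).1 ⊆ T₀ := (σ i).2.1.trans hT₄T₀
      obtain ⟨Q, hQ1, hQ2⟩ := hbig (σ i).1 (σ i).2.2 (hpos _ h1 (σ i).2.2)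
      exact ⟨Q, hQ1, hQ2⟩
    choose Qt hQt1 hQt2 using hQt
    have hQtlav : ∀ i, LaverTree (Qt i) := fun i => (hQt2 i).1
    have hQttr : ∀ i, #{S : Set (ℕ → ℕ) | ∃ F ∈ 𝓕, S = F ∩ body (Qt i)} = continuum :=
      fun i => (hQt2 i).2.2
    have hQtT₄ : ∀ i, Qt i ⊆ T₄ := fun i => (hQt1 i).trans (σ i).2.1
    -- the two conditions for the abstract construction
    have hsmall : ∀ i : ι, #(Set.Iio i) < continuum := fun i => Cardinal.mk_Iio_ord_toType i
    have hy : ∀ (i : ι) (H : Set (Set LaverAux.Pt)), H ⊆ 𝓕 \ X₀ → #H < continuum →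
        ∃ y, y ∈ body (Qt i) ∧ y ∉ ⋃₀ H := by
      intro i H h1 h2
      have := hGP H h1 h2 (Qt i) (hQtT₄ i) (hQtlav i)
      obtain ⟨y, hy1, hy2⟩ := Set.not_subset.mp this
      exact ⟨y, hy1, hy2⟩
    have hF : ∀ (i : ι) (Z : Set LaverAux.Pt), #Z < continuum →
        ∃ F, F ∈ 𝓕 \ X₀ ∧ (F ∩ body (Qt i)).Nonempty ∧ ∀ z ∈ Z, z ∉ F := by
      intro i Z hZ
      set B := body (Qt i) with hB
      set covs := ⋃ z ∈ Z, {G | G ∈ 𝓕 ∧ z ∈ G} with hcovs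
      have hcovscard : #covs < continuum := by
        refine lt_of_le_of_lt (Cardinal.mk_biUnion_le _ _) ?_
        refine Cardinal.mul_lt_of_lt aleph0_le_continuum hZ ?_
        exact lt_of_le_of_lt (ciSup_le' fun z => (Set.Finite.lt_aleph0 (hpf z)).le)
          aleph0_lt_continuum
      set Bad := ((fun G => G ∩ B) '' covs) ∪ {(∅ : Set LaverAux.Pt)} with hBad
      have hBadcard : #Bad < continuum := by
        refine lt_of_le_of_lt (Cardinal.mk_union_le _ _) ?_
        refine Cardinal.add_lt_of_lt aleph0_le_continuum
          (lt_of_le_of_lt Cardinal.mk_image_le hcovscard) ?_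
        rw [Cardinal.mk_singleton]
        exact one_lt_aleph0.trans aleph0_lt_continuum
      have hkey : ∃ F, F ∈ 𝓕 ∧ F ∉ X₀ ∧ (F ∩ B) ∉ Bad := by
        by_contra hno
        push_neg at hno
        have hsub : {S : Set (ℕ → ℕ) | ∃ F ∈ 𝓕, S = F ∩ B} ⊆
            Bad ∪ ((fun G => G ∩ B) '' X₀) := by
          rintro S ⟨F, hF, rfl⟩
          by_cases hX : F ∈ X₀
          · exact Or.inr ⟨F, hX, rfl⟩
          · exact Or.inl (hno F hF hX)
        have hlt : #{S : Set (ℕ → ℕ) | ∃ F ∈ 𝓕, S = F ∩ B} < continuum := by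
          refine lt_of_le_of_lt (Cardinal.mk_le_mk_of_subset hsub) ?_
          refine lt_of_le_of_lt (Cardinal.mk_union_le _ _) ?_
          exact Cardinal.add_lt_of_lt aleph0_le_continuum hBadcard
            (lt_of_le_of_lt Cardinal.mk_image_le hX₀c)
        rw [hQttr i] at hlt
        exact lt_irrefl _ hlt
      obtain ⟨F, hF1, hF2, hF3⟩ := hkey
      refine ⟨F, ⟨hF1, hF2⟩, ?_, ?_⟩
      · refine Set.nonempty_iff_ne_empty.mpr fun he => hF3 (Or.inr ?_)
        rw [he]
        rfl
      · intro z hz hzF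
        exact hF3 (Or.inl ⟨F, Set.mem_biUnion hz ⟨hF1, hzF⟩, rfl⟩)
    obtain ⟨yv, Fv, hyvB, hFvpool, hFvne, hpair⟩ :=
      LaverAux.exists_pairs hsmall (𝓕 \ X₀) (fun i => body (Qt i)) hy hF
    refine ⟨Set.range Fv, ?_, ?_⟩
    · rintro F ⟨i, rfl⟩
      exact (hFvpool i).1
    · intro hLS
      obtain ⟨Q, hQT₄, hQlav, halt⟩ := hLS T₄ hT₄lav
      obtain ⟨i, hi⟩ : ∃ i, σ i = ⟨Q, hQT₄, hQlav⟩ := ⟨emb ⟨Q, hQT₄, hQlav⟩, hσsurj _⟩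
      have hsubQ : body (Qt i) ⊆ body Q := by
        refine body_mono ?_
        have := hQt1 i
        rw [hi] at this
        exact this
      rcases halt with hsub | hdisj
      · have : yv i ∈ ⋃₀ Set.range Fv := hsub (hsubQ (hyvB i))
        obtain ⟨F, ⟨j, rfl⟩, hyF⟩ := this
        exact hpair i j hyF
      · obtain ⟨p, hp1, hp2⟩ := hFvne i
        have hp3 : p ∈ body Q ∩ ⋃₀ Set.range Fv :=
          ⟨hsubQ hp2, ⟨Fv i, ⟨i, rfl⟩, hp1⟩⟩
        rw [hdisj] at hp3
        exact hp3
  · -- Failure case: fusion along an `ω`-sequence contradicts point-finiteness.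
    exfalso
    push_neg at hGP
    have hfail := hGP
    obtain ⟨s₀, hs₀⟩ := LaverAux.laver_stemmed hT₀lav
    -- one step of the fusion
    have hstep : ∀ (n : ℕ)
        (cur : Set (List ℕ) × List ℕ × Set (Set (ℕ → ℕ)) × Set (Set (ℕ → ℕ))),
        ∃ next : Set (List ℕ) × List ℕ × Set (Set (ℕ → ℕ)) × Set (Set (ℕ → ℕ)),
        (LaverAux.Stemmed cur.1 cur.2.1 ∧ cur.1 ⊆ T₀ ∧ cur.2.2.1 ⊆ 𝓕 ∧
            #cur.2.2.1 < continuum) →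
          (next.1 ⊆ cur.1 ∧ LaverAux.Stemmed next.1 next.2.1 ∧ next.1 ⊆ T₀ ∧
            cur.2.1 <+: next.2.1 ∧ cur.2.1.length < next.2.1.length ∧
            (n + 1) ≤ next.2.1.length ∧
            next.2.2.1 = cur.2.2.1 ∪ next.2.2.2 ∧ next.2.2.2 ⊆ 𝓕 \ cur.2.2.1 ∧
            #next.2.2.1 < continuum ∧ next.2.2.1 ⊆ 𝓕 ∧ body next.1 ⊆ ⋃₀ next.2.2.2) := by
      intro n cur
      by_cases h : LaverAux.Stemmed cur.1 cur.2.1 ∧ cur.1 ⊆ T₀ ∧ cur.2.2.1 ⊆ 𝓕 ∧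
          #cur.2.2.1 < continuum
      · obtain ⟨hstm, hsubT₀, hXF, hXc⟩ := h
        obtain ⟨H, hH1, hH2, Q, hQ1, hQ2, hQ3⟩ :=
          hfail cur.2.2.1 cur.1 hXF hXc hsubT₀ hstm.laver
        obtain ⟨u, hu⟩ := LaverAux.laver_stemmed hQ2
        obtain ⟨T', s', hs1, hs2, _, hs4⟩ := hu.extend (max (cur.2.1.length + 1) (n + 1))
        have hT'cur : T' ⊆ cur.1 := hs1.trans hQ1
        have hs'len : cur.2.1.length + 1 ≤ s'.length := le_trans (le_max_left _ _) hs4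
        have hpre : cur.2.1 <+: s' := by
          rcases hstm.2.2.1 s' (hT'cur hs2.2.1) with h' | h'
          · exact absurd h'.length_le (by omega)
          · exact h'
        have hlt' : cur.2.1.length < s'.length := by omega
        have hle' : n + 1 ≤ s'.length := le_trans (le_max_right _ _) hs4
        refine ⟨(T', s', cur.2.2.1 ∪ H, H), fun _ => ?_⟩
        refine ⟨hT'cur, hs2, hT'cur.trans hsubT₀, hpre, hlt', hle', rfl, hH1, ?_, ?_, ?_⟩
        · exact lt_of_le_of_lt (Cardinal.mk_union_le _ _)
            (Cardinal.add_lt_of_lt aleph0_le_continuum hXc hH2)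
        · exact Set.union_subset hXF (hH1.trans Set.diff_subset)
        · exact (LaverAux.body_mono hs1).trans hQ3
      · exact ⟨cur, fun hc => absurd hc h⟩
    choose stepFn hstepFn using hstep
    obtain ⟨seq, hseq0, hseqS⟩ : ∃ seq : ℕ →
        Set (List ℕ) × List ℕ × Set (Set (ℕ → ℕ)) × Set (Set (ℕ → ℕ)),
        seq 0 = (T₀, s₀, ∅, ∅) ∧ ∀ n, seq (n + 1) = stepFn n (seq n) :=
      ⟨fun n => Nat.rec (T₀, s₀, ∅, ∅) (fun n ih => stepFn n ih) n, rfl, fun _ => rfl⟩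
    have hinv : ∀ n, LaverAux.Stemmed (seq n).1 (seq n).2.1 ∧ (seq n).1 ⊆ T₀ ∧
        (seq n).2.2.1 ⊆ 𝓕 ∧ #(seq n).2.2.1 < continuum := by
      intro n
      induction n with
      | zero =>
        rw [hseq0]
        refine ⟨hs₀, subset_rfl, Set.empty_subset _, ?_⟩
        rw [Cardinal.mk_emptyCollection]
        exact aleph0_pos.trans_le aleph0_le_continuum
      | succ n ih =>
        have := hstepFn n (seq n) ih
        rw [← hseqS n] at this
        exact ⟨this.2.1, this.2.2.1, this.2.2.2.2.2.2.2.2.2.1, this.2.2.2.2.2.2.2.2.1⟩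
    have srel : ∀ n, (seq (n + 1)).1 ⊆ (seq n).1 ∧
        (seq n).2.1 <+: (seq (n + 1)).2.1 ∧
        (seq n).2.1.length < (seq (n + 1)).2.1.length ∧
        (n + 1) ≤ (seq (n + 1)).2.1.length ∧
        (seq (n + 1)).2.2.1 = (seq n).2.2.1 ∪ (seq (n + 1)).2.2.2 ∧
        (seq (n + 1)).2.2.2 ⊆ 𝓕 \ (seq n).2.2.1 ∧
        body (seq (n + 1)).1 ⊆ ⋃₀ (seq (n + 1)).2.2.2 := by
      intro n
      have := hstepFn n (seq n) (hinv n)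
      rw [← hseqS n] at this
      exact ⟨this.1, this.2.2.2.1, this.2.2.2.2.1, this.2.2.2.2.2.1, this.2.2.2.2.2.2.1,
        this.2.2.2.2.2.2.2.1, this.2.2.2.2.2.2.2.2.2.2⟩
    -- monotonicity along the sequence
    have hTmono : ∀ m n, m ≤ n → (seq n).1 ⊆ (seq m).1 := by
      intro m n h
      induction n, h using Nat.le_induction with
      | base => exact subset_rfl
      | succ n _ ih => exact (srel n).1.trans ih
    have hsmono : ∀ m n, m ≤ n → (seq m).2.1 <+: (seq n).2.1 := by
      intro m n h
      induction n, h using Nat.le_induction with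
      | base => exact List.prefix_rfl
      | succ n _ ih => exact ih.trans (srel n).2.1
    have hXmono : ∀ m n, m ≤ n → (seq m).2.2.1 ⊆ (seq n).2.2.1 := by
      intro m n h
      induction n, h using Nat.le_induction with
      | base => exact subset_rfl
      | succ n _ ih =>
        refine ih.trans ?_
        rw [(srel n).2.2.2.2.1]
        exact Set.subset_union_left
    have hslen : ∀ n, n ≤ (seq n).2.1.length := by
      intro n
      cases n with
      | zero => exact Nat.zero_le _
      | succ n => exact (srel n).2.2.2.1
    -- the diagonal branch
    let x : ℕ → ℕ := fun i => ((seq (i + 1)).2.1).getD i 0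
    have hxi : ∀ i, x i = ((seq (i + 1)).2.1).getD i 0 := fun _ => rfl
    have hxval : ∀ n i, i + 1 ≤ n → x i = ((seq n).2.1).getD i 0 := by
      intro n i hin
      have h1 : i < (seq (i + 1)).2.1.length := lt_of_lt_of_le (Nat.lt_succ_self i)
        (hslen (i + 1))
      have h2 : i < (seq n).2.1.length :=
        lt_of_lt_of_le h1 (hsmono (i + 1) n hin).length_le
      rw [hxi i, List.getD_eq_getElem _ _ h1, List.getD_eq_getElem _ _ h2]
      exact (hsmono (i + 1) n hin).getElem h1
    have hofn : ∀ (ℓ n : ℕ), ℓ ≤ (seq n).2.1.length →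
        List.ofFn (fun j : Fin ℓ => x j) = ((seq n).2.1).take ℓ := by
      intro ℓ n hℓ
      refine List.ext_getElem ?_ ?_
      · simp [Nat.min_eq_left hℓ]
      · intro i h1 h2
        have hiℓ : i < ℓ := by simpa using h1
        have hilen : i < (seq n).2.1.length := lt_of_lt_of_le hiℓ hℓ
        rw [List.getElem_ofFn, List.getElem_take]
        rcases le_total (i + 1) n with hc | hc
        · rw [hxval n i hc, List.getD_eq_getElem _ _ hilen]
        · have h1' : i < (seq (i + 1)).2.1.length :=
            lt_of_lt_of_le (Nat.lt_succ_self i) (hslen (i + 1))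
          have hgs := (hsmono n (i + 1) hc).getElem hilen
          rw [hxi i, List.getD_eq_getElem _ _ h1', ← hgs]
    have hxbody : ∀ m, x ∈ body (seq m).1 := by
      intro m
      intro ℓ
      have hℓ : ℓ ≤ (seq (max m ℓ)).2.1.length :=
        le_trans (le_max_right m ℓ) (hslen (max m ℓ))
      rw [hofn ℓ (max m ℓ) hℓ]
      have hmem : ((seq (max m ℓ)).2.1) ∈ (seq m).1 :=
        hTmono m (max m ℓ) (le_max_left m ℓ) (hinv (max m ℓ)).1.2.1
      exact (hinv m).1.1 _ hmem ℓ
    have hcovx : ∀ n, ∃ F, F ∈ (seq (n + 1)).2.2.2 ∧ x ∈ F := by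
      intro n
      have := (srel n).2.2.2.2.2.2 (hxbody (n + 1))
      obtain ⟨F, hF1, hF2⟩ := this
      exact ⟨F, hF1, hF2⟩
    choose Fc hFc1 hFc2 using hcovx
    have hFc𝓕 : ∀ n, Fc n ∈ 𝓕 := fun n => ((srel n).2.2.2.2.2.1 (hFc1 n)).1
    have hFcX : ∀ n, Fc n ∈ (seq (n + 1)).2.2.1 := by
      intro n
      rw [(srel n).2.2.2.2.1]
      exact Or.inr (hFc1 n)
    have hkey : ∀ m n, m < n → Fc m ≠ Fc n := by
      intro m n hmn heq
      have h1 : Fc m ∈ (seq n).2.2.1 := hXmono (m + 1) n hmn (hFcX m)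
      have h2 : Fc n ∉ (seq n).2.2.1 := ((srel n).2.2.2.2.2.1 (hFc1 n)).2
      rw [← heq] at h2
      exact h2 h1
    have hinj : Function.Injective Fc := by
      intro a b hab
      rcases lt_trichotomy a b with h | h | h
      · exact absurd hab (hkey a b h)
      · exact h
      · exact absurd hab.symm (hkey b a h)
    have hinf : Set.Infinite {G | G ∈ 𝓕 ∧ x ∈ G} :=
      Set.infinite_of_injective_forall_mem hinj (fun n => ⟨hFc𝓕 n, hFc2 n⟩)
    exact Set.not_infinite.mpr (hpf x) hinf
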